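/- For a weak composition s of length n, the map sending an s-decreasing tree to its multiset of tree-inversions is a bijection between s-decreasing trees and s-tree-inversion sets. -/

import Mathlib

/-- Planar rooted trees: leaves are unlabeled; internal nodes carry a natural
number label and an ordered list of children. -/
inductive STree : Type where
  | leaf : STree
  | node : ℕ → List STree → STree

namespace STree

mutual
  /-- `x` occurs as the label of an internal node of the tree. -/
  def mem (x : ℕ) : STree → Bool
    | .leaf => false
    | .node a cs => x == a || memL x cs
  def memL (x : ℕ) : List STree → Bool
    | [] => false
    | t :: ts => mem x t || memL x ts
end

mutual
  /-- The list of internal node labels, in preorder. -/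
  def labels : STree → List ℕ
    | .leaf => []
    | .node a cs => a :: labelsL cs
  def labelsL : List STree → List ℕ
    | [] => []
    | t :: ts => labels t ++ labelsL ts
end

mutual
  /-- Local well-formedness for the signature `s` : an internal node labeled `a`
  has `s a + 1` children, and all labels below it are smaller than `a`. -/
  def wf (s : ℕ → ℕ) : STree → Prop
    | .leaf => True
    | .node a cs => cs.length = s a + 1 ∧ (∀ b ∈ labelsL cs, b < a) ∧ wfL s cs
  def wfL (s : ℕ → ℕ) : List STree → Prop
    | [] => True
    | t :: ts => wf s t ∧ wfL s ts
end

/-- `T` is an `s`-decreasing tree: its internal nodes are labeled bijectively by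
`1, …, n`, node `i` has `s i + 1` ordered children, and all descendants of a node
have smaller labels. -/
def IsSDecreasingTree (n : ℕ) (s : ℕ → ℕ) (T : STree) : Prop :=
  wf s T ∧ (labels T).Perm (List.range' 1 n)

/-- Index of the first tree of the list containing the label `x`. -/
def idxOf (x : ℕ) : List STree → ℕ
  | [] => 0
  | t :: ts => if mem x t then 0 else idxOf x ts + 1

mutual
  /-- The cardinality `card_T(y,x)` of the pair `(y,x)` in the tree:
  `0` if `x` is (weakly) left of `y`, `i` if `x` lies in the `i`-th child
  subtree of `y`, and `s y` if `x` is right of `y`. -/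
  def card (s : ℕ → ℕ) (y x : ℕ) : STree → ℕ
    | .leaf => 0
    | .node a cs => if a = y then idxOf x cs else cardL s y x cs
  def cardL (s : ℕ → ℕ) (y x : ℕ) : List STree → ℕ
    | [] => 0
    | t :: ts =>
      if mem y t then
        (if mem x t then card s y x t else if memL x ts then s y else 0)
      else (if mem x t then 0 else cardL s y x ts)
end

/-- The tree-inversion multiset of `T`, as a multiplicity function on pairs
`(y,x)` with `1 ≤ x < y ≤ n`. -/
def treeInv (n : ℕ) (s : ℕ → ℕ) (T : STree) : ℕ → ℕ → ℕ := fun y x =>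
  if 1 ≤ x ∧ x < y ∧ y ≤ n then card s y x T else 0

/-- A multi inversion set on `1, …, n` bounded by the weak composition `s`. -/
def IsMultiInvSet (n : ℕ) (s : ℕ → ℕ) (I : ℕ → ℕ → ℕ) : Prop :=
  (∀ y x, I y x ≤ s y) ∧ ∀ y x, ¬(1 ≤ x ∧ x < y ∧ y ≤ n) → I y x = 0

/-- Transitivity: for `a < b < c`, `card(c,b) = i` implies `card(b,a) = 0` or
`card(c,a) ≥ i`. -/
def InvTransitive (I : ℕ → ℕ → ℕ) : Prop :=
  ∀ a b c : ℕ, a < b → b < c → I b a = 0 ∨ I c b ≤ I c a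

/-- Planarity: for `a < b < c`, `card(c,a) = i` implies `card(b,a) = s b` or
`card(c,b) ≥ i`. -/
def InvPlanar (s : ℕ → ℕ) (I : ℕ → ℕ → ℕ) : Prop :=
  ∀ a b c : ℕ, a < b → b < c → I b a = s b ∨ I c a ≤ I c b

/-- An `s`-tree-inversion set: a bounded multi inversion set that is transitive
and planar. -/
def IsTreeInvSet (n : ℕ) (s : ℕ → ℕ) (I : ℕ → ℕ → ℕ) : Prop :=
  IsMultiInvSet n s I ∧ InvTransitive I ∧ InvPlanar s I

/-- Inclusion of multi inversion sets: pointwise comparison of multiplicities. -/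
def invLE (I J : ℕ → ℕ → ℕ) : Prop := ∀ y x, I y x ≤ J y x

/-- The `s`-weak order: inclusion of tree-inversion multisets. -/
def sWeakLE (n : ℕ) (s : ℕ → ℕ) (T R : STree) : Prop :=
  invLE (treeInv n s T) (treeInv n s R)

/-- Union of multi inversion sets: pointwise maximum. -/
def invUnion (I J : ℕ → ℕ → ℕ) : ℕ → ℕ → ℕ := fun y x => max (I y x) (J y x)

/-- Transitive closure: `tc I (c,a)` is the maximal value of `I (b₁, b₂)` over
all transitivity paths `c = b₁ > b₂ > … > b_k = a` (consecutive entries have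
positive multiplicity). -/
noncomputable def tc (I : ℕ → ℕ → ℕ) : ℕ → ℕ → ℕ := fun c a =>
  sSup {v | ∃ (b : ℕ) (l : List ℕ),
    List.Chain (fun u w => w < u ∧ 0 < I u w) c (b :: l) ∧
    (b :: l).getLast (List.cons_ne_nil b l) = a ∧ v = I c b}

/-- Adding the inversion `(c,a)`: increase its multiplicity by one. -/
def addInv (I : ℕ → ℕ → ℕ) (c a : ℕ) : ℕ → ℕ → ℕ := fun y x =>
  if y = c ∧ x = a then I y x + 1 else I y x

mutual
  /-- `a` is a (proper) descendant of the node labeled `c`. -/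
  def descIn (c a : ℕ) : STree → Bool
    | .leaf => false
    | .node b cs => (b == c && memL a cs) || descInL c a cs
  def descInL (c a : ℕ) : List STree → Bool
    | [] => false
    | t :: ts => descIn c a t || descInL c a ts
end

mutual
  /-- `a` belongs to the rightmost child subtree of the node labeled `c`. -/
  def inRight (c a : ℕ) : STree → Bool
    | .leaf => false
    | .node b cs =>
      (b == c && (match cs.getLast? with
        | some t => mem a t
        | none => false)) || inRightL c a cs
  def inRightL (c a : ℕ) : List STree → Bool
    | [] => false
    | t :: ts => inRight c a t || inRightL c a ts
end

mutual
  /-- `a` belongs to the leftmost child subtree of the node labeled `c`. -/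
  def inLeft (c a : ℕ) : STree → Bool
    | .leaf => false
    | .node b cs =>
      (b == c && (match cs.head? with
        | some t => mem a t
        | none => false)) || inLeftL c a cs
  def inLeftL (c a : ℕ) : List STree → Bool
    | [] => false
    | t :: ts => inLeft c a t || inLeftL c a ts
end

mutual
  /-- The rightmost child subtree of the node labeled `a` is empty (a leaf). -/
  def rightEmpty (a : ℕ) : STree → Bool
    | .leaf => false
    | .node b cs =>
      (b == a && (match cs.getLast? with
        | some .leaf => true
        | _ => false)) || rightEmptyL a cs
  def rightEmptyL (a : ℕ) : List STree → Bool
    | [] => false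
    | t :: ts => rightEmpty a t || rightEmptyL a ts
end

/-- `(a,c)` is a tree-ascent of `T`: `a` is a descendant of `c`, not in the
rightmost subtree of `c`; `a` lies in the rightmost subtree of any `b` with
`a < b < c` having `a` as a descendant; and if `s a > 0` the rightmost
(strict right) subtree of `a` is empty. -/
def IsTreeAscent (s : ℕ → ℕ) (T : STree) (a c : ℕ) : Prop :=
  a < c ∧ descIn c a T = true ∧ inRight c a T = false ∧
  (∀ b : ℕ, a < b → b < c → descIn b a T = true → inRight b a T = true) ∧
  (0 < s a → rightEmpty a T = true)

/-- `a` is the root label of the tree. -/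
def hasRoot (a : ℕ) : STree → Bool
  | .leaf => false
  | .node b _ => a == b

mutual
  /-- `a` is a direct child of the node `c`, but not its rightmost child. -/
  def nonRightChild (c a : ℕ) : STree → Bool
    | .leaf => false
    | .node b cs => (b == c && cs.dropLast.any (hasRoot a)) || nonRightChildL c a cs
  def nonRightChildL (c a : ℕ) : List STree → Bool
    | [] => false
    | t :: ts => nonRightChild c a t || nonRightChildL c a ts
end

/-- `(a,c)` is a Tamari-ascent of `T`: `a` is a non-right child of `c`. -/
def IsTamariAscent (T : STree) (a c : ℕ) : Prop :=
  a < c ∧ nonRightChild c a T = true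

mutual
  /-- Horizontal mirror image of a tree: the order of children is reversed at
  every internal node. -/
  def mirror : STree → STree
    | .leaf => .leaf
    | .node a cs => .node a (mirrorL cs)
  def mirrorL : List STree → List STree
    | [] => []
    | t :: ts => mirrorL ts ++ [mirror t]
end

/-- `T` is an `s`-Tamari tree: `card(c,a) ≤ card(c,b)` for all `a < b < c`. -/
def TamariProp (n : ℕ) (s : ℕ → ℕ) (T : STree) : Prop :=
  ∀ a b c : ℕ, a < b → b < c → treeInv n s T c a ≤ treeInv n s T c b

/-- `T` is an `s`-maximal-Tamari tree: `card(b,a) = s b` implies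
`card(c,a) = s c` for all `c > b`. -/
def MaxTamariProp (n : ℕ) (s : ℕ → ℕ) (T : STree) : Prop :=
  ∀ a b c : ℕ, 1 ≤ a → a < b → b < c → c ≤ n →
    treeInv n s T b a = s b → treeInv n s T c a = s c

/-- The projection `π↓` on inversion sets:
`card_Q(c,a) = min { card_T(c,b) : a ≤ b < c }`. -/
noncomputable def pidownInv (n : ℕ) (s : ℕ → ℕ) (T : STree) : ℕ → ℕ → ℕ :=
  fun c a => sInf {v | ∃ b : ℕ, a ≤ b ∧ b < c ∧ v = treeInv n s T c b}

open scoped Classical in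
/-- The projection `π↑` on inversion sets: `card_R(c,a) = s c` if there is
`a < b < c` with `card_T(b,a) = s b`, and `card_R(c,a) = card_T(c,a)` otherwise. -/
noncomputable def piupInv (n : ℕ) (s : ℕ → ℕ) (T : STree) : ℕ → ℕ → ℕ :=
  fun c a =>
    if 1 ≤ a ∧ a < c ∧ c ≤ n then
      if ∃ b : ℕ, a < b ∧ b < c ∧ treeInv n s T b a = s b then s c
      else treeInv n s T c a
    else 0

end STree

/-!
Replace the label set `{1, …, n}` by an arbitrary finite set `L` and induct on `L`. The root of a
decreasing tree on `L` is `m = max L`, and the row `card(m, ·)` records in which subtree of the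
root every other label lies, so it splits `L \ {m}` into blocks, one per subtree. Between two
blocks an inversion `(y, x)` is forced: it is `0` if the block of `x` lies left of that of `y`
and `s y` otherwise; for a tree-inversion set this is exactly transitivity, resp. planarity,
for the triple `x < y < m`. Inside a block, the tree-inversion set restricts to one on the block.
So trees and tree-inversion sets on `L` both amount to a root row together with objects of the
same kind on the blocks, and the bijection follows by strong induction on `L`.
-/

namespace STree

mutual
theorem mem_iff (x : ℕ) : ∀ T : STree, mem x T = true ↔ x ∈ labels T
  | .leaf => by simp [mem, labels]
  | .node a cs => by simp [mem, labels, memL_iff x cs]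
theorem memL_iff (x : ℕ) : ∀ cs : List STree, memL x cs = true ↔ x ∈ labelsL cs
  | [] => by simp [memL, labelsL]
  | t :: ts => by simp [memL, labelsL, mem_iff x t, memL_iff x ts]
end

variable {s : ℕ → ℕ} {L : Finset ℕ} {I J : ℕ → ℕ → ℕ} {m n x y j : ℕ} {cs : List STree}

theorem labelsL_eq_flatMap : ∀ cs : List STree, labelsL cs = cs.flatMap labels
  | [] => rfl
  | t :: ts => by simp [labelsL, labelsL_eq_flatMap ts]

theorem wfL_iff_forall : ∀ {cs : List STree}, wfL s cs ↔ ∀ t ∈ cs, wf s t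
  | [] => by simp [wfL]
  | t :: ts => by simp [wfL, wfL_iff_forall (cs := ts)]

theorem idxOf_eq_findIdx (x : ℕ) : ∀ cs : List STree, idxOf x cs = cs.findIdx (mem x)
  | [] => rfl
  | t :: ts => by cases h : mem x t <;> simp [idxOf, List.findIdx_cons, h, idxOf_eq_findIdx x ts]

theorem idxOf_lt_length (hx : x ∈ labelsL cs) : idxOf x cs < cs.length := by
  rw [labelsL_eq_flatMap, List.mem_flatMap] at hx
  obtain ⟨t, ht, hxt⟩ := hx
  rw [idxOf_eq_findIdx]
  exact List.findIdx_lt_length_of_exists ⟨t, ht, (mem_iff x t).2 hxt⟩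

theorem mem_labels_getElem_iff (hnd : (labelsL cs).Nodup) (hj : j < cs.length) :
    x ∈ labels cs[j] ↔ x ∈ labelsL cs ∧ idxOf x cs = j := by
  rw [idxOf_eq_findIdx]
  constructor
  · intro hx
    refine ⟨labelsL_eq_flatMap cs ▸ List.mem_flatMap.2 ⟨_, List.getElem_mem hj, hx⟩,
      (List.findIdx_eq hj).2 ⟨(mem_iff x _).2 hx, fun i hij => ?_⟩⟩
    rw [labelsL_eq_flatMap, List.nodup_flatMap, List.pairwise_iff_getElem] at hnd
    rw [Bool.eq_false_iff, ne_eq, mem_iff]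
    exact fun hxi => hnd.2 i j (hij.trans hj) hj hij hxi hx
  · rintro ⟨hx, rfl⟩
    exact (mem_iff x _).1 List.findIdx_getElem

theorem cardL_of_idxOf_lt : ∀ {cs : List STree}, y ∈ labelsL cs →
    idxOf x cs < idxOf y cs → cardL s y x cs = 0
  | [], hy, _ => by simp [labelsL] at hy
  | t :: ts, hy, h => by
    by_cases hyt : mem y t
    · simp [idxOf, hyt] at h
    by_cases hxt : mem x t
    · simp [cardL, hyt, hxt]
    simp only [idxOf, hyt, hxt, Bool.false_eq_true, if_false, Nat.add_lt_add_iff_right] at h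
    rw [labelsL, List.mem_append, ← mem_iff] at hy
    simpa [cardL, hyt, hxt] using cardL_of_idxOf_lt (hy.resolve_left hyt) h

theorem cardL_of_idxOf_gt : ∀ {cs : List STree}, x ∈ labelsL cs →
    idxOf y cs < idxOf x cs → cardL s y x cs = s y
  | [], hx, _ => by simp [labelsL] at hx
  | t :: ts, hx, h => by
    by_cases hxt : mem x t
    · simp [idxOf, hxt] at h
    rw [labelsL, List.mem_append, ← mem_iff, ← memL_iff] at hx
    by_cases hyt : mem y t
    · simp [cardL, hyt, hxt, hx.resolve_left hxt]
    simp only [idxOf, hyt, hxt, Bool.false_eq_true, if_false, Nat.add_lt_add_iff_right] at h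
    simpa [cardL, hyt, hxt] using
      cardL_of_idxOf_gt ((memL_iff x ts).1 (hx.resolve_left hxt)) h

theorem cardL_of_idxOf_eq : ∀ {cs : List STree} (hy : y ∈ labelsL cs),
    idxOf x cs = idxOf y cs → cardL s y x cs = card s y x (cs[idxOf y cs]'(idxOf_lt_length hy))
  | [], hy, _ => by simp [labelsL] at hy
  | t :: ts, hy, h => by
    by_cases hyt : mem y t
    · have hxt : mem x t := by by_contra hxt; simp [idxOf, hxt, hyt] at h
      simp [cardL, idxOf, hyt, hxt]
    have hxt : mem x t = false := by cases hxt : mem x t <;> simp_all [idxOf]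
    simp only [idxOf, hyt, hxt, Bool.false_eq_true, if_false, Nat.add_right_cancel_iff] at h
    rw [labelsL, List.mem_append, ← mem_iff] at hy
    simpa [cardL, idxOf, hyt, hxt] using cardL_of_idxOf_eq (hy.resolve_left hyt) h

def restrictInv (I : ℕ → ℕ → ℕ) (L : Finset ℕ) : ℕ → ℕ → ℕ := fun y x =>
  if x ∈ L ∧ y ∈ L ∧ x < y then I y x else 0

/-- For the inversions `I` of a decreasing tree on `L` with root `m`, this is the label set of
the `j`-th subtree of the root (`IsDecreasingTreeOn.toFinset_labels_getElem`). -/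
def block (I : ℕ → ℕ → ℕ) (L : Finset ℕ) (m j : ℕ) : Finset ℕ :=
  (L.erase m).filter (I m · = j)

structure IsTreeInvSetOn (s : ℕ → ℕ) (L : Finset ℕ) (I : ℕ → ℕ → ℕ) : Prop where
  le : ∀ y x, I y x ≤ s y
  eq_zero : ∀ y x, ¬(x ∈ L ∧ y ∈ L ∧ x < y) → I y x = 0
  transitive : ∀ a ∈ L, ∀ b ∈ L, ∀ c ∈ L, a < b → b < c → I b a = 0 ∨ I c b ≤ I c a
  planar : ∀ a ∈ L, ∀ b ∈ L, ∀ c ∈ L, a < b → b < c → I b a = s b ∨ I c a ≤ I c b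

theorem restrictInv_of_mem (hx : x ∈ L) (hy : y ∈ L) (hxy : x < y) :
    restrictInv I L y x = I y x :=
  if_pos ⟨hx, hy, hxy⟩

theorem mem_block : x ∈ block I L m j ↔ x ∈ L ∧ x ≠ m ∧ I m x = j := by
  simp [block, and_comm, and_assoc]

theorem block_ssubset (hm : m ∈ L) (j : ℕ) : block I L m j ⊂ L :=
  (Finset.filter_subset _ _).trans_ssubset (Finset.erase_ssubset hm)

theorem isTreeInvSetOn_empty : IsTreeInvSetOn s ∅ I ↔ I = 0 := by
  refine ⟨fun h => funext₂ fun y x => h.eq_zero y x (by simp), ?_⟩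
  rintro rfl
  exact ⟨fun _ _ => Nat.zero_le _, fun _ _ _ => rfl, by simp, by simp⟩

theorem IsTreeInvSetOn.restrict {L' : Finset ℕ} (h : IsTreeInvSetOn s L I) (hL : L' ⊆ L) :
    IsTreeInvSetOn s L' (restrictInv I L') where
  le y x := by unfold restrictInv; split_ifs <;> simp [h.le]
  eq_zero y x hyx := if_neg hyx
  transitive a ha b hb c hc hab hbc := by
    simp only [restrictInv_of_mem ha hb hab, restrictInv_of_mem hb hc hbc,
      restrictInv_of_mem ha hc (hab.trans hbc)]
    exact h.transitive a (hL ha) b (hL hb) c (hL hc) hab hbc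
  planar a ha b hb c hc hab hbc := by
    simp only [restrictInv_of_mem ha hb hab, restrictInv_of_mem hb hc hbc,
      restrictInv_of_mem ha hc (hab.trans hbc)]
    exact h.planar a (hL ha) b (hL hb) c (hL hc) hab hbc

namespace IsTreeInvSetOn

variable (h : IsTreeInvSetOn s L I) (hm : IsGreatest (L : Set ℕ) m)
include h hm

theorem eq_zero_of_root_lt (hx : x ∈ L) (hy : y ∈ L) (hym : y ≠ m) (hxy : x < y)
    (hroot : I m x < I m y) : I y x = 0 :=
  (h.transitive x hx y hy m hm.1 hxy (lt_of_le_of_ne (hm.2 hy) hym)).resolve_right (by omega)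

theorem eq_of_root_gt (hx : x ∈ L) (hy : y ∈ L) (hym : y ≠ m) (hxy : x < y)
    (hroot : I m y < I m x) : I y x = s y :=
  (h.planar x hx y hy m hm.1 hxy (lt_of_le_of_ne (hm.2 hy) hym)).resolve_right (by omega)

theorem ext_of_blocks (hJ : IsTreeInvSetOn s L J)
    (hblock : ∀ j ≤ s m, block I L m j = block J L m j ∧
      restrictInv I (block I L m j) = restrictInv J (block I L m j)) : I = J := by
  have hroot (x : ℕ) : I m x = J m x := by
    by_cases hx : x ∈ L ∧ x ≠ m
    · have hxI : x ∈ block I L m (I m x) := mem_block.2 ⟨hx.1, hx.2, rfl⟩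
      rw [(hblock _ (h.le m x)).1, mem_block] at hxI
      exact hxI.2.2.symm
    · have hxm : ¬(x ∈ L ∧ m ∈ L ∧ x < m) := fun ⟨hxL, _, hxm⟩ => hx ⟨hxL, hxm.ne⟩
      rw [h.eq_zero m x hxm, hJ.eq_zero m x hxm]
  funext y x
  by_cases hxy : x ∈ L ∧ y ∈ L ∧ x < y
  swap
  · rw [h.eq_zero y x hxy, hJ.eq_zero y x hxy]
  obtain ⟨hx, hy, hxy⟩ := hxy
  by_cases hym : y = m
  · exact hym ▸ hroot x
  rcases lt_trichotomy (I m x) (I m y) with hlt | heq | hgt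
  · rw [h.eq_zero_of_root_lt hm hx hy hym hxy hlt,
      hJ.eq_zero_of_root_lt hm hx hy hym hxy (by rwa [← hroot, ← hroot])]
  · have hx' : x ∈ block I L m (I m y) := mem_block.2 ⟨hx, (hxy.trans_le (hm.2 hy)).ne, heq⟩
    have hy' : y ∈ block I L m (I m y) := mem_block.2 ⟨hy, hym, rfl⟩
    have := congrFun₂ (hblock (I m y) (h.le m y)).2 y x
    rwa [restrictInv_of_mem hx' hy' hxy, restrictInv_of_mem hx' hy' hxy] at this
  · rw [h.eq_of_root_gt hm hx hy hym hxy hgt,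
      hJ.eq_of_root_gt hm hx hy hym hxy (by rwa [← hroot, ← hroot])]

end IsTreeInvSetOn

section OfBlocks

variable (hm : IsGreatest (L : Set ℕ) m)
  (hzero : ∀ y x, ¬(x ∈ L ∧ y ∈ L ∧ x < y) → I y x = 0) (hroot : ∀ x, I m x ≤ s m)
  (hlt : ∀ x ∈ L, ∀ y ∈ L, y ≠ m → x < y → I m x < I m y → I y x = 0)
  (hgt : ∀ x ∈ L, ∀ y ∈ L, y ≠ m → x < y → I m y < I m x → I y x = s y)
  (hblock : ∀ j ≤ s m, IsTreeInvSetOn s (block I L m j) (restrictInv I (block I L m j)))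
include hm hzero hroot hlt hgt hblock

theorem le_of_blocks (y x : ℕ) : I y x ≤ s y := by
  by_cases hxy : x ∈ L ∧ y ∈ L ∧ x < y
  swap
  · simp [hzero y x hxy]
  obtain ⟨hx, hy, hxy⟩ := hxy
  by_cases hym : y = m
  · exact hym ▸ hroot x
  rcases lt_trichotomy (I m x) (I m y) with h | h | h
  · simp [hlt x hx y hy hym hxy h]
  · have hx' : x ∈ block I L m (I m y) := mem_block.2 ⟨hx, (hxy.trans_le (hm.2 hy)).ne, h⟩
    have hy' : y ∈ block I L m (I m y) := mem_block.2 ⟨hy, hym, rfl⟩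
    simpa [restrictInv_of_mem hx' hy' hxy] using (hblock _ (hroot y)).le y x
  · exact (hgt x hx y hy hym hxy h).le

theorem IsTreeInvSetOn.of_blocks : IsTreeInvSetOn s L I := by
  have hle := le_of_blocks hm hzero hroot hlt hgt hblock
  have hne {x y : ℕ} (hy : y ∈ L) (hxy : x < y) : x ≠ m := (hxy.trans_le (hm.2 hy)).ne
  suffices key : ∀ a ∈ L, ∀ b ∈ L, ∀ c ∈ L, a < b → b < c →
      (I b a = 0 ∨ I c b ≤ I c a) ∧ (I b a = s b ∨ I c a ≤ I c b) from
    ⟨hle, hzero, fun a ha b hb c hc hab hbc => (key a ha b hb c hc hab hbc).1,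
      fun a ha b hb c hc hab hbc => (key a ha b hb c hc hab hbc).2⟩
  intro a ha b hb c hc hab hbc
  have := hlt a ha b hb (hne hc hbc) hab
  have := hgt a ha b hb (hne hc hbc) hab
  by_cases hcm : c = m
  · subst hcm
    omega
  have := hlt a ha c hc hcm (hab.trans hbc)
  have := hlt b hb c hc hcm hbc
  have := hgt a ha c hc hcm (hab.trans hbc)
  have := hgt b hb c hc hcm hbc
  have := hle c a
  have := hle c b
  -- unless `a`, `b`, `c` lie in one block, the facts above settle both axioms
  by_cases hsame : I m a = I m b ∧ I m b = I m c
  · have ha' : a ∈ block I L m (I m b) := mem_block.2 ⟨ha, hne hb hab, hsame.1⟩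
    have hb' : b ∈ block I L m (I m b) := mem_block.2 ⟨hb, hne hc hbc, rfl⟩
    have hc' : c ∈ block I L m (I m b) := mem_block.2 ⟨hc, hcm, hsame.2.symm⟩
    have htr := (hblock (I m b) (hroot b)).transitive a ha' b hb' c hc' hab hbc
    have hpl := (hblock (I m b) (hroot b)).planar a ha' b hb' c hc' hab hbc
    simp only [restrictInv_of_mem ha' hb' hab, restrictInv_of_mem hb' hc' hbc,
      restrictInv_of_mem ha' hc' (hab.trans hbc)] at htr hpl
    exact ⟨htr, hpl⟩
  · omega

end OfBlocks

def inversions (s : ℕ → ℕ) (T : STree) : ℕ → ℕ → ℕ :=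
  restrictInv (fun y x => card s y x T) (labels T).toFinset

def IsDecreasingTreeOn (s : ℕ → ℕ) (L : Finset ℕ) (T : STree) : Prop :=
  wf s T ∧ (labels T).Nodup ∧ (labels T).toFinset = L

theorem inversions_leaf : inversions s .leaf = 0 := by
  funext y x
  simp [inversions, restrictInv, labels]

theorem isDecreasingTreeOn_empty {T : STree} : IsDecreasingTreeOn s ∅ T ↔ T = .leaf := by
  refine ⟨fun ⟨_, _, hL⟩ => ?_, ?_⟩
  · cases T with
    | leaf => rfl
    | node a cs => simp [labels] at hL
  · rintro rfl
    exact ⟨trivial, List.nodup_nil, rfl⟩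

theorem IsDecreasingTreeOn.mem_labels_iff {T : STree} (hT : IsDecreasingTreeOn s L T) :
    x ∈ labels T ↔ x ∈ L := by
  rw [← List.mem_toFinset, hT.2.2]

section Node

variable (hT : IsDecreasingTreeOn s L (.node m cs))
include hT

theorem IsDecreasingTreeOn.length_eq : cs.length = s m + 1 := hT.1.1

theorem IsDecreasingTreeOn.lt_root (hx : x ∈ labelsL cs) : x < m := hT.1.2.1 x hx

theorem IsDecreasingTreeOn.nodup_labelsL : (labelsL cs).Nodup := (List.nodup_cons.1 hT.2.1).2

theorem IsDecreasingTreeOn.mem_labelsL_iff : x ∈ labelsL cs ↔ x ∈ L ∧ x ≠ m := by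
  rw [← hT.mem_labels_iff, labels, List.mem_cons]
  exact ⟨fun hx => ⟨.inr hx, (hT.lt_root hx).ne⟩, fun ⟨hx, hxm⟩ => hx.resolve_left hxm⟩

theorem IsDecreasingTreeOn.isGreatest_root : IsGreatest (L : Set ℕ) m := by
  refine ⟨hT.mem_labels_iff.1 (List.mem_cons_self ..), fun x hx => ?_⟩
  by_cases hxm : x = m
  · exact hxm.le
  · exact (hT.lt_root (hT.mem_labelsL_iff.2 ⟨hx, hxm⟩)).le

theorem IsDecreasingTreeOn.inversions_root (hx : x ∈ labelsL cs) :
    inversions s (.node m cs) m x = idxOf x cs := by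
  rw [inversions, restrictInv_of_mem (by simp [labels, hx]) (by simp [labels]) (hT.lt_root hx)]
  simp [card]

theorem IsDecreasingTreeOn.inversions_of_mem (hx : x ∈ labelsL cs) (hy : y ∈ labelsL cs)
    (hxy : x < y) : inversions s (.node m cs) y x = cardL s y x cs := by
  rw [inversions, restrictInv_of_mem (by simp [labels, hx]) (by simp [labels, hy]) hxy]
  simp [card, (hT.lt_root hy).ne']

theorem IsDecreasingTreeOn.toFinset_labels_getElem (hj : j < cs.length) :
    (labels cs[j]).toFinset = block (inversions s (.node m cs)) L m j := by
  ext x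
  rw [List.mem_toFinset, mem_labels_getElem_iff hT.nodup_labelsL hj, mem_block, ← and_assoc,
    ← hT.mem_labelsL_iff]
  exact and_congr_right fun hx => by rw [hT.inversions_root hx]

theorem IsDecreasingTreeOn.inversions_getElem (hj : j < cs.length) :
    inversions s cs[j] = restrictInv (inversions s (.node m cs)) (labels cs[j]).toFinset := by
  funext y x
  by_cases h : x ∈ (labels cs[j]).toFinset ∧ y ∈ (labels cs[j]).toFinset ∧ x < y
  swap
  · simp only [inversions, restrictInv, if_neg h]
  obtain ⟨hx, hy, hxy⟩ := h
  rw [restrictInv_of_mem hx hy hxy, inversions, restrictInv_of_mem hx hy hxy]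
  rw [List.mem_toFinset, mem_labels_getElem_iff hT.nodup_labelsL hj] at hx hy
  rw [hT.inversions_of_mem hx.1 hy.1 hxy, cardL_of_idxOf_eq hy.1 (hx.2.trans hy.2.symm)]
  simp only [hy.2]

theorem IsDecreasingTreeOn.isDecreasingTreeOn_getElem (hj : j < cs.length) :
    IsDecreasingTreeOn s (labels cs[j]).toFinset cs[j] := by
  have hnd := hT.nodup_labelsL
  rw [labelsL_eq_flatMap, List.nodup_flatMap] at hnd
  exact ⟨wfL_iff_forall.1 hT.1.2.2 _ (List.getElem_mem hj), hnd.1 _ (List.getElem_mem hj), rfl⟩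

theorem IsDecreasingTreeOn.isTreeInvSetOn_inversions
    (hchild : ∀ j (hj : j < cs.length),
      IsTreeInvSetOn s (labels cs[j]).toFinset (inversions s cs[j])) :
    IsTreeInvSetOn s L (inversions s (.node m cs)) := by
  have hm := hT.isGreatest_root
  have hmem {x y : ℕ} (hy : y ∈ L) (hxy : x < y) (hx : x ∈ L) : x ∈ labelsL cs :=
    hT.mem_labelsL_iff.2 ⟨hx, (hxy.trans_le (hm.2 hy)).ne⟩
  have hzero (y x : ℕ) (h : ¬(x ∈ L ∧ y ∈ L ∧ x < y)) : inversions s (.node m cs) y x = 0 := by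
    rw [inversions, restrictInv, hT.2.2, if_neg h]
  refine .of_blocks hm hzero (fun x => ?_) (fun x hx y hy hym hxy h => ?_)
    (fun x hx y hy hym hxy h => ?_) (fun j hj => ?_)
  · by_cases hx : x ∈ labelsL cs
    · rw [hT.inversions_root hx, ← Nat.lt_add_one_iff, ← hT.length_eq]
      exact idxOf_lt_length hx
    · rw [hzero m x fun ⟨hxL, hmL, hxm⟩ => hx (hmem hmL hxm hxL)]
      exact Nat.zero_le _
  · have hy' := hT.mem_labelsL_iff.2 ⟨hy, hym⟩
    rw [hT.inversions_root (hmem hy hxy hx), hT.inversions_root hy'] at h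
    rw [hT.inversions_of_mem (hmem hy hxy hx) hy' hxy, cardL_of_idxOf_lt hy' h]
  · have hx' := hmem hy hxy hx
    rw [hT.inversions_root hx', hT.inversions_root (hT.mem_labelsL_iff.2 ⟨hy, hym⟩)] at h
    rw [hT.inversions_of_mem hx' (hT.mem_labelsL_iff.2 ⟨hy, hym⟩) hxy, cardL_of_idxOf_gt hx' h]
  · have hj' : j < cs.length := hT.length_eq ▸ Nat.lt_add_one_of_le hj
    rw [← hT.toFinset_labels_getElem hj', ← hT.inversions_getElem hj']
    exact hchild j hj'

end Node

theorem IsDecreasingTreeOn.eq_node {T : STree} (hT : IsDecreasingTreeOn s L T)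
    (hne : L.Nonempty) : ∃ cs, T = .node (L.max' hne) cs := by
  cases T with
  | leaf => exact (hne.ne_empty (by simpa [labels] using hT.2.2.symm)).elim
  | node a cs => exact ⟨cs, by rw [hT.isGreatest_root.unique (L.isGreatest_max' hne)]⟩

theorem isDecreasingTreeOn_node_ofFn (hm : IsGreatest (L : Set ℕ) m) (hroot : ∀ x, I m x ≤ s m)
    {T : Fin (s m + 1) → STree}
    (hT : ∀ j : Fin (s m + 1), IsDecreasingTreeOn s (block I L m j) (T j)) :
    IsDecreasingTreeOn s L (.node m (List.ofFn T)) := by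
  have hmem {x : ℕ} : x ∈ labelsL (List.ofFn T) ↔ x ∈ L ∧ x ≠ m := by
    simp only [labelsL_eq_flatMap, List.mem_flatMap, List.mem_ofFn, exists_exists_eq_and]
    constructor
    · rintro ⟨j, hj⟩
      obtain ⟨hx, hxm, -⟩ := mem_block.1 ((hT j).mem_labels_iff.1 hj)
      exact ⟨hx, hxm⟩
    · rintro ⟨hx, hxm⟩
      exact ⟨⟨I m x, Nat.lt_add_one_of_le (hroot x)⟩,
        (hT _).mem_labels_iff.2 (mem_block.2 ⟨hx, hxm, rfl⟩)⟩
  refine ⟨⟨List.length_ofFn, fun x hx => lt_of_le_of_ne (hm.2 (hmem.1 hx).1) (hmem.1 hx).2,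
    wfL_iff_forall.2 ?_⟩, ?_, ?_⟩
  · simp only [List.mem_ofFn]
    rintro _ ⟨j, rfl⟩
    exact (hT j).1
  · rw [labels, List.nodup_cons, labelsL_eq_flatMap, List.nodup_flatMap, List.pairwise_ofFn]
    refine ⟨fun h => (hmem.1 ((labelsL_eq_flatMap _).symm ▸ h)).2 rfl, ?_, fun i j hij => ?_⟩
    · simp only [List.mem_ofFn]
      rintro _ ⟨j, rfl⟩
      exact (hT j).2.1
    · refine List.disjoint_left.2 fun x hi hj => hij.ne (Fin.ext ?_)
      rw [(hT i).mem_labels_iff, mem_block] at hi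
      rw [(hT j).mem_labels_iff, mem_block] at hj
      exact hi.2.2.symm.trans hj.2.2
  · ext x
    rw [List.mem_toFinset, labels, List.mem_cons, hmem]
    by_cases hxm : x = m
    · simpa [hxm] using hm.1
    · simp [hxm]

section Induction

variable (ih : ∀ L' ⊂ L,
  Set.BijOn (inversions s) {T | IsDecreasingTreeOn s L' T} {I | IsTreeInvSetOn s L' I})
include ih

theorem mapsTo_inversions :
    Set.MapsTo (inversions s) {T | IsDecreasingTreeOn s L T} {I | IsTreeInvSetOn s L I} := by
  intro T hT
  rcases L.eq_empty_or_nonempty with rfl | hne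
  · rw [isDecreasingTreeOn_empty.1 hT, inversions_leaf]
    exact isTreeInvSetOn_empty.2 rfl
  obtain ⟨cs, rfl⟩ := hT.eq_node hne
  refine hT.isTreeInvSetOn_inversions fun j hj =>
    (ih _ ?_).mapsTo (hT.isDecreasingTreeOn_getElem hj)
  rw [hT.toFinset_labels_getElem hj]
  exact block_ssubset hT.isGreatest_root.1 j

theorem injOn_inversions : Set.InjOn (inversions s) {T | IsDecreasingTreeOn s L T} := by
  intro T hT T' hT' h
  rcases L.eq_empty_or_nonempty with rfl | hne
  · rw [isDecreasingTreeOn_empty.1 hT, isDecreasingTreeOn_empty.1 hT']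
  obtain ⟨cs, rfl⟩ := hT.eq_node hne
  obtain ⟨cs', rfl⟩ := hT'.eq_node hne
  congr 1
  refine List.ext_getElem (hT.length_eq.trans hT'.length_eq.symm) fun j hj hj' => ?_
  have hlabels : (labels cs'[j]).toFinset = (labels cs[j]).toFinset := by
    rw [hT.toFinset_labels_getElem hj, hT'.toFinset_labels_getElem hj', h]
  have hsub : (labels cs[j]).toFinset ⊂ L := by
    rw [hT.toFinset_labels_getElem hj]
    exact block_ssubset hT.isGreatest_root.1 j
  refine (ih _ hsub).injOn (hT.isDecreasingTreeOn_getElem hj)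
    (hlabels ▸ hT'.isDecreasingTreeOn_getElem hj') ?_
  rw [hT.inversions_getElem hj, hT'.inversions_getElem hj', h, hlabels]

theorem surjOn_inversions :
    Set.SurjOn (inversions s) {T | IsDecreasingTreeOn s L T} {I | IsTreeInvSetOn s L I} := by
  intro I hI
  rcases L.eq_empty_or_nonempty with rfl | hne
  · refine ⟨.leaf, isDecreasingTreeOn_empty.2 rfl, ?_⟩
    rw [inversions_leaf, isTreeInvSetOn_empty.1 hI]
  obtain ⟨m, hm⟩ : ∃ m, IsGreatest (L : Set ℕ) m := ⟨_, L.isGreatest_max' hne⟩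
  have hchild (j : ℕ) : ∃ T, IsDecreasingTreeOn s (block I L m j) T ∧
      inversions s T = restrictInv I (block I L m j) :=
    (ih _ (block_ssubset hm.1 j)).surjOn
      (hI.restrict ((Finset.filter_subset _ _).trans (Finset.erase_subset _ _)))
  choose T hT hTinv using hchild
  have hdec := isDecreasingTreeOn_node_ofFn hm (hI.le m) (T := fun j => T j) fun j => hT j
  refine ⟨_, hdec, (mapsTo_inversions ih hdec).ext_of_blocks hm hI fun j hj => ?_⟩
  have hj' : j < (List.ofFn fun j : Fin (s m + 1) => T j).length := by
    simpa using Nat.lt_add_one_of_le hj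
  have hblock := hdec.toFinset_labels_getElem hj'
  have hinv := hdec.inversions_getElem hj'
  simp only [List.getElem_ofFn] at hblock hinv
  rw [(hT j).2.2] at hblock hinv
  rw [← hblock, ← hinv, hTinv]
  exact ⟨rfl, rfl⟩

end Induction

theorem bijOn_inversions (s : ℕ → ℕ) (L : Finset ℕ) :
    Set.BijOn (inversions s) {T | IsDecreasingTreeOn s L T} {I | IsTreeInvSetOn s L I} := by
  induction L using Finset.strongInduction with
  | H L ih => exact ⟨mapsTo_inversions ih, injOn_inversions ih, surjOn_inversions ih⟩

theorem isSDecreasingTree_iff {T : STree} :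
    IsSDecreasingTree n s T ↔ IsDecreasingTreeOn s (Finset.Icc 1 n) T := by
  have hrange : (List.range' 1 n).toFinset = Finset.Icc 1 n := by
    ext
    simp only [List.mem_toFinset, List.mem_range'_1, Finset.mem_Icc]
    omega
  rw [IsSDecreasingTree, IsDecreasingTreeOn, ← hrange]
  refine and_congr_right fun _ => ⟨fun hp => ⟨hp.nodup_iff.2 List.nodup_range', ?_⟩, ?_⟩
  · exact List.toFinset_eq_of_perm _ _ hp
  · exact fun ⟨hnd, h⟩ => List.perm_of_nodup_nodup_toFinset_eq hnd List.nodup_range' h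

theorem isTreeInvSet_iff : IsTreeInvSet n s I ↔ IsTreeInvSetOn s (Finset.Icc 1 n) I := by
  constructor
  · rintro ⟨⟨hle, hzero⟩, htr, hpl⟩
    refine ⟨hle, fun y x h => hzero y x fun ⟨h1, h2, h3⟩ => h ?_,
      fun a _ b _ c _ => htr a b c, fun a _ b _ c _ => hpl a b c⟩
    simp only [Finset.mem_Icc]
    omega
  · intro h
    have hzero (y x : ℕ) (hxy : ¬(1 ≤ x ∧ x < y ∧ y ≤ n)) : I y x = 0 :=
      h.eq_zero y x fun hin => hxy (by simp only [Finset.mem_Icc] at hin; omega)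
    have hmem {x : ℕ} (h1 : 1 ≤ x) (h2 : x ≤ n) : x ∈ Finset.Icc 1 n := Finset.mem_Icc.2 ⟨h1, h2⟩
    refine ⟨⟨h.le, hzero⟩, fun a b c hab hbc => ?_, fun a b c hab hbc => ?_⟩
    · by_cases ha : 1 ≤ a
      · by_cases hc : c ≤ n
        · exact h.transitive a (hmem ha (by omega)) b (hmem (by omega) (by omega)) c
            (hmem (by omega) hc) hab hbc
        · simp [hzero c b (by omega)]
      · exact .inl (hzero b a (by omega))
    · by_cases hac : 1 ≤ a ∧ c ≤ n
      · exact h.planar a (hmem hac.1 (by omega)) b (hmem (by omega) (by omega)) c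
          (hmem (by omega) hac.2) hab hbc
      · simp [hzero c a (by omega)]

theorem IsDecreasingTreeOn.inversions_eq_treeInv {T : STree}
    (hT : IsDecreasingTreeOn s (Finset.Icc 1 n) T) : inversions s T = treeInv n s T := by
  funext y x
  simp only [inversions, restrictInv, treeInv, hT.2.2, Finset.mem_Icc]
  exact if_congr (by omega) rfl rfl

end STree

open STree in
/-- The map sending an `s`-decreasing tree to its multiset of tree-inversions is
a bijection between `s`-decreasing trees and `s`-tree-inversion sets. -/
theorem treeInv_bijOn (n : ℕ) (s : ℕ → ℕ) :
    Set.BijOn (treeInv n s)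
      {T : STree | IsSDecreasingTree n s T}
      {I : ℕ → ℕ → ℕ | IsTreeInvSet n s I} := by
  have hdec : {T : STree | IsSDecreasingTree n s T} =
      {T | IsDecreasingTreeOn s (Finset.Icc 1 n) T} := Set.ext fun _ => isSDecreasingTree_iff
  have hinv : {I : ℕ → ℕ → ℕ | IsTreeInvSet n s I} =
      {I | IsTreeInvSetOn s (Finset.Icc 1 n) I} := Set.ext fun _ => isTreeInvSet_iff
  rw [hdec, hinv]
  exact (bijOn_inversions s _).congr fun _ hT => hT.inversions_eq_treeInv
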